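/- Define $G_1(\alpha) = \Big(\int_0^1 \big(\tfrac{1 - 2\alpha + 2\alpha\cos(1/\sqrt{\alpha})}{\sin(1/\sqrt{\alpha})}\sin(x/\sqrt{\alpha}) - 2\alpha\cos(x/\sqrt{\alpha}) - x^2 + 2\alpha\big)^2 dx\Big)^{1/2}$ for $\alpha \in [0.1, 0.3]$. Then the equation $\alpha = G_1(\alpha)$ has at least one solution in the interval $[0.1, 0.3]$. -/

import Mathlib

/-!
`G₁(α)` is the `L²(0, 1)` norm of the solution `u_α` of `α u'' + u = -x²`, `u(0) = u(1) = 0`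
(`bvpSolution`); `bvpCoeff α` is the coefficient of `sin (x / √α)` that makes `u_α(1) = 0`.
At `α = 0.45²` the norm is at least `∫ u_α`, which has a closed form and exceeds `α`. At
`α = 0.54²` the pointwise bounds `-x⁴ / (12 α) ≤ u_α(x) ≤ bvpCoeff α` keep the norm below `α`.
The intermediate value theorem then gives a fixed point in between. The values of `sin` and `cos`
at `20/9` and `50/27` are bounded by Taylor polynomials, whose remainders have alternating signs
on `[0, ∞)`.
-/
open Real Set
open scoped Nat

noncomputable def sinTaylor (n : ℕ) (x : ℝ) : ℝ :=
  ∑ k ∈ Finset.range n, (-1) ^ k * x ^ (2 * k + 1) / (2 * k + 1)!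

noncomputable def cosTaylor (n : ℕ) (x : ℝ) : ℝ :=
  ∑ k ∈ Finset.range n, (-1) ^ k * x ^ (2 * k) / (2 * k)!

theorem sinTaylor_zero_right (n : ℕ) : sinTaylor n 0 = 0 := by
  simp [sinTaylor]

theorem cosTaylor_succ_zero_right (n : ℕ) : cosTaylor (n + 1) 0 = 1 := by
  simp [cosTaylor, Finset.sum_range_succ']

theorem hasDerivAt_sinTaylor (n : ℕ) (x : ℝ) : HasDerivAt (sinTaylor n) (cosTaylor n x) x := by
  induction n with
  | zero =>
    have : sinTaylor 0 = fun _ ↦ 0 := by funext; simp [sinTaylor]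
    simpa [this, cosTaylor] using hasDerivAt_const x (0 : ℝ)
  | succ n ih =>
    have hsucc : sinTaylor (n + 1) =
        fun y ↦ sinTaylor n y + (-1) ^ n * y ^ (2 * n + 1) / (2 * n + 1)! := by
      funext y; simp only [sinTaylor, Finset.sum_range_succ]
    rw [hsucc]
    refine (ih.add (((hasDerivAt_pow _ x).const_mul _).div_const _)).congr_deriv ?_
    simp only [cosTaylor, Finset.sum_range_succ, add_tsub_cancel_right, Nat.factorial_succ]
    push_cast
    field_simp

theorem hasDerivAt_cosTaylor_succ (n : ℕ) (x : ℝ) :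
    HasDerivAt (cosTaylor (n + 1)) (-sinTaylor n x) x := by
  induction n with
  | zero =>
    have : cosTaylor 1 = fun _ ↦ 1 := by funext; simp [cosTaylor]
    simpa [this, sinTaylor] using hasDerivAt_const x (1 : ℝ)
  | succ n ih =>
    have hsucc : cosTaylor (n + 2) =
        fun y ↦ cosTaylor (n + 1) y + (-1) ^ (n + 1) * y ^ (2 * n + 2) / (2 * n + 2)! := by
      funext y; simp only [cosTaylor, Finset.sum_range_succ (n := n + 1)]; ring_nf
    rw [hsucc]
    refine (ih.add (((hasDerivAt_pow _ x).const_mul _).div_const _)).congr_deriv ?_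
    simp only [sinTaylor, Finset.sum_range_succ, Nat.factorial_succ]
    push_cast
    field_simp
    ring

theorem nonneg_of_hasDerivAt_nonneg {f f' : ℝ → ℝ} (hf : ∀ x, HasDerivAt f (f' x) x)
    (h₀ : f 0 = 0) (hf' : ∀ x, 0 ≤ x → 0 ≤ f' x) {x : ℝ} (hx : 0 ≤ x) : 0 ≤ f x :=
  h₀ ▸ monotoneOn_of_hasDerivWithinAt_nonneg (convex_Ici 0)
    (fun y _ ↦ (hf y).continuousAt.continuousWithinAt) (fun y _ ↦ (hf y).hasDerivWithinAt)
    (fun y hy ↦ hf' y (le_of_lt (by simpa using hy))) self_mem_Ici hx hx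

-- Each remainder vanishes at `0` and has the next-lower remainder as its derivative, up to sign.
theorem neg_one_pow_mul_taylor_remainder_nonneg (n : ℕ) {x : ℝ} (hx : 0 ≤ x) :
    0 ≤ (-1) ^ (n + 1) * (cos x - cosTaylor (n + 1) x) ∧
      0 ≤ (-1) ^ (n + 1) * (sin x - sinTaylor (n + 1) x) := by
  induction n generalizing x with
  | zero => simpa [cosTaylor, sinTaylor] using ⟨cos_le_one x, sin_le hx⟩
  | succ n ih =>
    have hcos : ∀ y, 0 ≤ y → 0 ≤ (-1) ^ (n + 2) * (cos y - cosTaylor (n + 2) y) := by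
      intro y hy
      refine nonneg_of_hasDerivAt_nonneg (fun z ↦ (((hasDerivAt_cos z).sub
        (hasDerivAt_cosTaylor_succ (n + 1) z)).const_mul _)) (by simp [cosTaylor_succ_zero_right])
        (fun z hz ↦ ?_) hy
      convert (ih hz).2 using 1; ring
    refine ⟨hcos x hx, nonneg_of_hasDerivAt_nonneg (fun z ↦ (((hasDerivAt_sin z).sub
      (hasDerivAt_sinTaylor (n + 2) z)).const_mul _)) (by simp [sinTaylor_zero_right]) hcos hx⟩

theorem sin_le_sinTaylor (n : ℕ) {x : ℝ} (hx : 0 ≤ x) : sin x ≤ sinTaylor (2 * n + 1) x := by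
  have := (neg_one_pow_mul_taylor_remainder_nonneg (2 * n) hx).2
  rw [pow_succ, pow_mul] at this
  norm_num at this
  linarith

theorem sinTaylor_le_sin (n : ℕ) {x : ℝ} (hx : 0 ≤ x) : sinTaylor (2 * n + 2) x ≤ sin x := by
  have := (neg_one_pow_mul_taylor_remainder_nonneg (2 * n + 1) hx).2
  rw [pow_succ, pow_succ, pow_mul] at this
  norm_num at this
  linarith

theorem cos_le_cosTaylor (n : ℕ) {x : ℝ} (hx : 0 ≤ x) : cos x ≤ cosTaylor (2 * n + 1) x := by
  have := (neg_one_pow_mul_taylor_remainder_nonneg (2 * n) hx).1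
  rw [pow_succ, pow_mul] at this
  norm_num at this
  linarith

theorem cosTaylor_le_cos (n : ℕ) {x : ℝ} (hx : 0 ≤ x) : cosTaylor (2 * n + 2) x ≤ cos x := by
  have := (neg_one_pow_mul_taylor_remainder_nonneg (2 * n + 1) hx).1
  rw [pow_succ, pow_succ, pow_mul] at this
  norm_num at this
  linarith

noncomputable def bvpCoeff (α : ℝ) : ℝ := (1 - 2 * α + 2 * α * cos (1 / √α)) / sin (1 / √α)

noncomputable def bvpSolution (α x : ℝ) : ℝ :=
  bvpCoeff α * sin (x / √α) - 2 * α * cos (x / √α) - x ^ 2 + 2 * α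

noncomputable def bvpSolutionNorm (α : ℝ) : ℝ := √(∫ x in (0:ℝ)..1, bvpSolution α x ^ 2)

theorem continuous_bvpSolution (α : ℝ) : Continuous (bvpSolution α) := by
  unfold bvpSolution; fun_prop

theorem sq_intervalIntegral_le {f : ℝ → ℝ} (hf : Continuous f) :
    (∫ x in (0:ℝ)..1, f x) ^ 2 ≤ ∫ x in (0:ℝ)..1, f x ^ 2 := by
  set c := ∫ x in (0:ℝ)..1, f x
  have key : ∫ x in (0:ℝ)..1, (2 * c * f x - c ^ 2) ≤ ∫ x in (0:ℝ)..1, f x ^ 2 :=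
    intervalIntegral.integral_mono_on zero_le_one
      ((by fun_prop : Continuous _).intervalIntegrable _ _)
      ((by fun_prop : Continuous _).intervalIntegrable _ _)
      fun x _ ↦ by nlinarith [sq_nonneg (f x - c)]
  rw [intervalIntegral.integral_sub ((by fun_prop : Continuous _).intervalIntegrable _ _)
      ((by fun_prop : Continuous _).intervalIntegrable _ _),
    intervalIntegral.integral_const_mul] at key
  simp only [intervalIntegral.integral_const, sub_zero, one_smul] at key
  nlinarith

theorem integral_bvpSolution {α : ℝ} (hα : 0 < α) :
    ∫ x in (0:ℝ)..1, bvpSolution α x =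
      bvpCoeff α * √α * (1 - cos (1 / √α)) - 2 * α * √α * sin (1 / √α) - 1 / 3 + 2 * α := by
  have hs : √α ≠ 0 := (sqrt_pos.2 hα).ne'
  have hderiv : ∀ x ∈ uIcc (0:ℝ) 1, HasDerivAt
      (fun y ↦ -bvpCoeff α * √α * cos (y / √α) - 2 * α * √α * sin (y / √α) - y ^ 3 / 3 + 2 * α * y)
      (bvpSolution α x) x := by
    intro x _
    have hdiv := (hasDerivAt_id x).div_const √α
    have h := ((((hasDerivAt_cos _).comp x hdiv).const_mul (-bvpCoeff α * √α)).sub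
      (((hasDerivAt_sin _).comp x hdiv).const_mul (2 * α * √α))).sub
      ((hasDerivAt_pow 3 x).div_const 3) |>.add ((hasDerivAt_id x).const_mul (2 * α))
    refine h.congr_deriv ?_
    simp only [bvpSolution, id]
    field_simp
    ring
  rw [intervalIntegral.integral_eq_sub_of_hasDerivAt hderiv
    ((continuous_bvpSolution α).intervalIntegrable _ _)]
  simp only [zero_div, cos_zero, sin_zero]
  ring

theorem integral_bvpSolution_le_bvpSolutionNorm (α : ℝ) :
    ∫ x in (0:ℝ)..1, bvpSolution α x ≤ bvpSolutionNorm α :=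
  (le_abs_self _).trans (abs_le_sqrt (sq_intervalIntegral_le (continuous_bvpSolution α)))

theorem bvpSolution_mem_Icc {α x : ℝ} (hα : 0 < α) (hαπ : 1 / √α ≤ π) (hA : 0 ≤ bvpCoeff α)
    (hx : x ∈ Icc (0:ℝ) 1) : bvpSolution α x ∈ Icc (-(1 / (12 * α))) (bvpCoeff α) := by
  have hs : 0 < √α := sqrt_pos.2 hα
  set t := x / √α with ht_def
  have hx_eq : x = √α * t := by rw [ht_def]; field_simp
  have hx2 : x ^ 2 = α * t ^ 2 := by rw [hx_eq, mul_pow, sq_sqrt hα.le]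
  have ht0 : 0 ≤ t := div_nonneg hx.1 hs.le
  have htπ : t ≤ π := (div_le_div_of_nonneg_right hx.2 hs.le).trans hαπ
  have hsin : 0 ≤ sin t := sin_nonneg_of_nonneg_of_le_pi ht0 htπ
  have hcos_lower := one_sub_sq_div_two_le_cos (x := t)
  have hcos_upper : cos t ≤ 1 - t ^ 2 / 2 + t ^ 4 / 24 := by
    convert cos_le_cosTaylor 1 ht0 using 1
    norm_num [cosTaylor, Finset.sum_range_succ, Nat.factorial]
    ring
  have ht4 : α * t ^ 4 ≤ 1 / α := by
    rw [le_div_iff₀ hα]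
    calc α * t ^ 4 * α = (x ^ 2) ^ 2 := by rw [hx2]; ring
      _ ≤ 1 := pow_le_one₀ (by positivity) (pow_le_one₀ hx.1 hx.2)
  have hA_sin : bvpCoeff α * sin t ≤ bvpCoeff α := mul_le_of_le_one_right hA (sin_le_one t)
  have hdiv : 1 / (12 * α) = 1 / α / 12 := by field_simp
  simp only [bvpSolution, ← ht_def, mem_Icc, hx2, hdiv]
  constructor <;> nlinarith [mul_nonneg hA hsin]

theorem bvpSolutionNorm_le {α : ℝ} (hα : 0 < α) (hαπ : 1 / √α ≤ π) (hA : 0 ≤ bvpCoeff α) :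
    bvpSolutionNorm α ≤ max (bvpCoeff α) (1 / (12 * α)) := by
  set M := max (bvpCoeff α) (1 / (12 * α))
  have hbound : ∫ x in (0:ℝ)..1, bvpSolution α x ^ 2 ≤ ∫ _ in (0:ℝ)..1, M ^ 2 :=
    intervalIntegral.integral_mono_on zero_le_one
      (((continuous_bvpSolution α).pow 2).intervalIntegrable _ _) intervalIntegrable_const
      fun x hx ↦ by
        obtain ⟨hlo, hhi⟩ := bvpSolution_mem_Icc hα hαπ hA hx
        exact sq_le_sq' (by linarith [le_max_right (bvpCoeff α) (1 / (12 * α))])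
          (hhi.trans (le_max_left _ _))
  rw [intervalIntegral.integral_const, sub_zero, one_smul] at hbound
  calc bvpSolutionNorm α ≤ √(M ^ 2) := sqrt_le_sqrt hbound
    _ = M := sqrt_sq (hA.trans (le_max_left _ _))

theorem sin_one_div_sqrt_pos {α : ℝ} (hα : (π ^ 2)⁻¹ < α) : 0 < sin (1 / √α) := by
  have hα₀ : 0 < α := lt_trans (by positivity) hα
  have hπ : 1 / π < √α := by
    rw [← sqrt_sq (one_div_pos.2 pi_pos).le, one_div, inv_pow]
    exact sqrt_lt_sqrt (by positivity) hα
  exact sin_pos_of_pos_of_lt_pi (by positivity) ((one_div_lt (sqrt_pos.2 hα₀) pi_pos).2 hπ)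

theorem inv_pi_sq_lt : (π ^ 2)⁻¹ < 1 / 9 := by
  rw [one_div, inv_lt_inv₀ (by positivity) (by norm_num)]
  nlinarith [pi_gt_three]

theorem continuousOn_bvpSolutionNorm : ContinuousOn bvpSolutionNorm (Ioi (π ^ 2)⁻¹) := by
  rw [continuousOn_iff_continuous_domRestrict]
  have hsqrt (α : Ioi (π ^ 2)⁻¹) : √(α : ℝ) ≠ 0 :=
    (sqrt_pos.2 (lt_trans (by positivity) α.2)).ne'
  have hcoeff : Continuous fun α : Ioi (π ^ 2)⁻¹ ↦ bvpCoeff α :=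
    Continuous.div (by fun_prop (disch := exact hsqrt)) (by fun_prop (disch := exact hsqrt))
      fun α ↦ (sin_one_div_sqrt_pos α.2).ne'
  have hsol : Continuous fun p : Ioi (π ^ 2)⁻¹ × ℝ ↦ bvpSolution p.1 p.2 ^ 2 := by
    have h2 : Continuous fun p : Ioi (π ^ 2)⁻¹ × ℝ ↦ bvpCoeff p.1 := hcoeff.comp continuous_fst
    unfold bvpSolution; fun_prop (disch := exact fun p ↦ hsqrt p.1)
  exact continuous_sqrt.comp
    (intervalIntegral.continuous_parametric_intervalIntegral_of_continuous' hsol 0 1)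

theorem lt_bvpSolutionNorm_0_2025 : (0.2025 : ℝ) < bvpSolutionNorm 0.2025 := by
  have hs : √(0.2025 : ℝ) = 9 / 20 := by
    rw [show (0.2025 : ℝ) = (9 / 20) ^ 2 by norm_num, sqrt_sq (by norm_num)]
  have hsin_hi : sin (20 / 9) ≤ 0.7954 := (sin_le_sinTaylor 2 (by norm_num)).trans
    (by norm_num [sinTaylor, Finset.sum_range_succ, Nat.factorial])
  have hcos_hi : cos (20 / 9) ≤ -0.6055 := (cos_le_cosTaylor 2 (by norm_num)).trans
    (by norm_num [cosTaylor, Finset.sum_range_succ, Nat.factorial])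
  have hcos_lo : (-0.6203 : ℝ) ≤ cos (20 / 9) := le_trans
    (by norm_num [cosTaylor, Finset.sum_range_succ, Nat.factorial])
    (cosTaylor_le_cos 1 (by norm_num))
  have hsin_pos : 0 < sin (20 / 9) := by
    simpa [hs] using sin_one_div_sqrt_pos (α := 0.2025) (inv_pi_sq_lt.trans (by norm_num))
  have hA : 0.432 ≤ bvpCoeff 0.2025 := by
    rw [bvpCoeff, hs, show 1 / (9 / 20 : ℝ) = 20 / 9 by norm_num, le_div_iff₀ hsin_pos]
    nlinarith
  refine lt_of_lt_of_le ?_ (integral_bvpSolution_le_bvpSolutionNorm _)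
  rw [integral_bvpSolution (by norm_num), hs, show 1 / (9 / 20 : ℝ) = 20 / 9 by norm_num]
  nlinarith [mul_le_mul_of_nonneg_right hA (by linarith : (0 : ℝ) ≤ 1 - cos (20 / 9))]

theorem bvpSolutionNorm_0_2916_lt : bvpSolutionNorm 0.2916 < 0.2916 := by
  have hs : √(0.2916 : ℝ) = 27 / 50 := by
    rw [show (0.2916 : ℝ) = (27 / 50) ^ 2 by norm_num, sqrt_sq (by norm_num)]
  have hsin_lo : (0.96 : ℝ) ≤ sin (50 / 27) := le_trans
    (by norm_num [sinTaylor, Finset.sum_range_succ, Nat.factorial])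
    (sinTaylor_le_sin 1 (by norm_num))
  have hcos_hi : cos (50 / 27) ≤ -0.2772 := (cos_le_cosTaylor 2 (by norm_num)).trans
    (by norm_num [cosTaylor, Finset.sum_range_succ, Nat.factorial])
  have hcos_lo : (-0.2807 : ℝ) ≤ cos (50 / 27) := le_trans
    (by norm_num [cosTaylor, Finset.sum_range_succ, Nat.factorial])
    (cosTaylor_le_cos 1 (by norm_num))
  have hsin_pos : 0 < sin (50 / 27) := by linarith
  have hcoeff :
      bvpCoeff 0.2916 = (1 - 2 * 0.2916 + 2 * 0.2916 * cos (50 / 27)) / sin (50 / 27) := by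
    rw [bvpCoeff, hs, show 1 / (27 / 50 : ℝ) = 50 / 27 by norm_num]
  have hA_nonneg : 0 ≤ bvpCoeff 0.2916 := by
    rw [hcoeff]; exact div_nonneg (by linarith) hsin_pos.le
  have hA_lt : bvpCoeff 0.2916 < 0.2916 := by
    rw [hcoeff, div_lt_iff₀ hsin_pos]; nlinarith
  refine (bvpSolutionNorm_le (by norm_num) ?_ hA_nonneg).trans_lt (max_lt hA_lt (by norm_num))
  rw [hs]
  linarith [pi_gt_three]

theorem exists_bvpSolutionNorm_eq_self : ∃ α ∈ Icc (0.2025 : ℝ) 0.2916, bvpSolutionNorm α = α := by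
  have hsub : Icc (0.2025 : ℝ) 0.2916 ⊆ Ioi (π ^ 2)⁻¹ :=
    fun α hα ↦ inv_pi_sq_lt.trans (by linarith [hα.1] : (1 / 9 : ℝ) < α)
  have hcont : ContinuousOn (fun α ↦ bvpSolutionNorm α - α) (Icc 0.2025 0.2916) :=
    (continuousOn_bvpSolutionNorm.mono hsub).sub continuousOn_id
  have hzero : (0 : ℝ) ∈ Icc (bvpSolutionNorm 0.2916 - 0.2916) (bvpSolutionNorm 0.2025 - 0.2025) :=
    ⟨by linarith [bvpSolutionNorm_0_2916_lt], by linarith [lt_bvpSolutionNorm_0_2025]⟩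
  obtain ⟨α, hα, hfix⟩ := intermediate_value_Icc' (by norm_num) hcont hzero
  exact ⟨α, hα, sub_eq_zero.1 hfix⟩

theorem stmt_17 (G₁ : ℝ → ℝ)
    (hG₁ : ∀ α ∈ Set.Icc (0.1:ℝ) 0.3, G₁ α =
      Real.sqrt (∫ x in (0:ℝ)..1,
        ((1 - 2 * α + 2 * α * Real.cos (1 / Real.sqrt α)) / Real.sin (1 / Real.sqrt α) *
            Real.sin (x / Real.sqrt α) -
          2 * α * Real.cos (x / Real.sqrt α) - x ^ 2 + 2 * α) ^ 2)) :
    ∃ α ∈ Set.Icc (0.1:ℝ) 0.3, α = G₁ α := by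
  obtain ⟨α, hα, hfix⟩ := exists_bvpSolutionNorm_eq_self
  have hα' : α ∈ Icc (0.1 : ℝ) 0.3 := Icc_subset_Icc (by norm_num) (by norm_num) hα
  exact ⟨α, hα', (hG₁ α hα').trans hfix |>.symm⟩
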